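/- arXiv:2603.24266 — 2 statements merged into one kernel-verified Lean document; each statement's English description precedes it below -/
import Mathlib

section
/- Let τ be a random time and let T, T1, T2 be F-stopping times such that {τ = T < ∞} = {τ = T1 < ∞} ∪ {τ = T2 < ∞} and {T1 = T2 < ∞} = ∅. Then for every γ > 0, P-almost everywhere: 1_{{τ=T}∩{T<∞}} · (log(1/P({τ=T}∩{T<∞} | F_T)))^γ = 1_{{τ=T1}∩{T1<∞}} · (log(1/P({τ=T1}∩{T1<∞} | F_{T1})))^γ + 1_{{τ=T2}∩{T2<∞}} · (log(1/P({τ=T2}∩{T2<∞} | F_{T2})))^γ. -/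
open MeasureTheory
open scoped NNReal ENNReal

/-- The σ-algebra `F_T` at a `[0,∞]`-valued `F`-stopping time `T`: all events `A ∈ 𝒢` with
`A ∩ {T ≤ t} ∈ F_t` for every `t ≥ 0`. -/
def stoppedSigma {Ω : Type*} {𝒢 : MeasurableSpace Ω} (ℱ : Filtration ℝ≥0 𝒢)
    (T : Ω → ℝ≥0∞)
    (hT : ∀ t : ℝ≥0, MeasurableSet[ℱ t] {ω | T ω ≤ (t : ℝ≥0∞)}) : MeasurableSpace Ω where
  MeasurableSet' A := MeasurableSet[𝒢] A ∧
    ∀ t : ℝ≥0, MeasurableSet[ℱ t] (A ∩ {ω | T ω ≤ (t : ℝ≥0∞)})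
  measurableSet_empty :=
    ⟨MeasurableSet.empty, fun t => by simp⟩
  measurableSet_compl := by
    intro A hA
    refine ⟨hA.1.compl, fun t => ?_⟩
    have h : Aᶜ ∩ {ω | T ω ≤ (t : ℝ≥0∞)}
        = {ω | T ω ≤ (t : ℝ≥0∞)} \ (A ∩ {ω | T ω ≤ (t : ℝ≥0∞)}) := by
      ext ω; simp only [Set.mem_inter_iff, Set.mem_compl_iff, Set.mem_diff, Set.mem_setOf_eq]
      tauto
    rw [h]
    exact (hT t).diff (hA.2 t)
  measurableSet_iUnion := by
    intro f hf
    refine ⟨MeasurableSet.iUnion fun i => (hf i).1, fun t => ?_⟩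
    rw [Set.iUnion_inter]
    exact MeasurableSet.iUnion fun i => (hf i).2 t

section AuxEntropy
open Set

lemma meas_of_le {Ω : Type*} {m : MeasurableSpace Ω} {S : Ω → ℝ≥0∞}
    (h : ∀ t : ℝ≥0, MeasurableSet[m] {ω | S ω ≤ (t : ℝ≥0∞)}) : Measurable[m] S := by
  apply measurable_of_Iic
  intro x
  rcases eq_or_ne x ⊤ with rfl | hx
  · have : S ⁻¹' Iic ⊤ = univ := by ext ω; simp
    rw [this]; exact MeasurableSet.univ
  · have := h x.toNNReal
    rw [ENNReal.coe_toNNReal hx] at this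
    exact this

lemma min_meas {Ω : Type*} {𝒢 : MeasurableSpace Ω} (ℱ : Filtration ℝ≥0 𝒢) (T : Ω → ℝ≥0∞)
    (hT : ∀ t : ℝ≥0, MeasurableSet[ℱ t] {ω | T ω ≤ (t : ℝ≥0∞)}) (t : ℝ≥0) :
    Measurable[ℱ t] (fun ω => T ω ⊓ (t : ℝ≥0∞)) := by
  apply measurable_of_Iic
  intro x
  by_cases hx : (t : ℝ≥0∞) ≤ x
  · have : (fun ω => T ω ⊓ (t : ℝ≥0∞)) ⁻¹' Iic x = univ := by
      ext ω; simp only [mem_preimage, mem_Iic, mem_univ, iff_true]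
      exact le_trans inf_le_right hx
    rw [this]; exact MeasurableSet.univ
  · push_neg at hx
    have hxne : x ≠ ⊤ := ne_top_of_lt (lt_of_lt_of_le hx le_top)
    have hxt : x.toNNReal ≤ t := by simpa using (ENNReal.toNNReal_le_toNNReal hxne ENNReal.coe_ne_top).2 hx.le
    have : (fun ω => T ω ⊓ (t : ℝ≥0∞)) ⁻¹' Iic x = {ω | T ω ≤ (x.toNNReal : ℝ≥0∞)} := by
      ext ω
      simp only [mem_preimage, mem_Iic, inf_le_iff, mem_setOf_eq, ENNReal.coe_toNNReal hxne]
      exact ⟨fun h => h.resolve_right (not_le.2 hx), fun h => Or.inl h⟩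
    rw [this]
    exact ℱ.mono hxt _ (hT x.toNNReal)

section Key
variable {Ω : Type*} {𝒢 : MeasurableSpace Ω}

/-- the agreement set `{T = S < ∞}` belongs to `stoppedSigma ℱ T`. -/
lemma agree_mem_stoppedSigma (ℱ : Filtration ℝ≥0 𝒢) (T S : Ω → ℝ≥0∞)
    (hT : ∀ t : ℝ≥0, MeasurableSet[ℱ t] {ω | T ω ≤ (t : ℝ≥0∞)})
    (hS : ∀ t : ℝ≥0, MeasurableSet[ℱ t] {ω | S ω ≤ (t : ℝ≥0∞)}) (t : ℝ≥0) :
    MeasurableSet[ℱ t] ({ω | T ω = S ω ∧ S ω < ∞} ∩ {ω | T ω ≤ (t : ℝ≥0∞)}) := by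
  have hkey : {ω | T ω = S ω ∧ S ω < ∞} ∩ {ω | T ω ≤ (t : ℝ≥0∞)}
      = (({ω | T ω ⊓ (t : ℝ≥0∞) ≤ S ω ⊓ (t : ℝ≥0∞)} ∩ {ω | S ω ⊓ (t : ℝ≥0∞) ≤ T ω ⊓ (t : ℝ≥0∞)}) ∩ {ω | T ω ≤ (t : ℝ≥0∞)})
        ∩ {ω | S ω ≤ (t : ℝ≥0∞)} := by
    ext ω
    simp only [mem_inter_iff, mem_setOf_eq]
    constructor
    · rintro ⟨⟨hTS, _⟩, hTt⟩
      exact ⟨⟨⟨le_of_eq (by rw [hTS]), le_of_eq (by rw [hTS])⟩, hTt⟩, hTS ▸ hTt⟩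
    · rintro ⟨⟨⟨ha, hb⟩, hTt⟩, hSt⟩
      have hmin : T ω ⊓ (t : ℝ≥0∞) = S ω ⊓ (t : ℝ≥0∞) := le_antisymm ha hb
      have h1 : T ω ⊓ (t : ℝ≥0∞) = T ω := inf_eq_left.2 hTt
      have h2 : S ω ⊓ (t : ℝ≥0∞) = S ω := inf_eq_left.2 hSt
      rw [h1, h2] at hmin
      exact ⟨⟨hmin, lt_of_le_of_lt hSt (by exact ENNReal.coe_lt_top)⟩, hTt⟩
  rw [hkey]
  exact ((((measurableSet_le (min_meas ℱ T hT t) (min_meas ℱ S hS t)).inter (measurableSet_le (min_meas ℱ S hS t) (min_meas ℱ T hT t))).inter (hT t)).inter (hS t))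

lemma condexp_agree (μ : Measure Ω) [IsProbabilityMeasure μ]
    (ℱ : Filtration ℝ≥0 𝒢) (T S : Ω → ℝ≥0∞)
    (hT : ∀ t : ℝ≥0, MeasurableSet[ℱ t] {ω | T ω ≤ (t : ℝ≥0∞)})
    (hS : ∀ t : ℝ≥0, MeasurableSet[ℱ t] {ω | S ω ≤ (t : ℝ≥0∞)})
    (A A1 : Set Ω) (hA : MeasurableSet[𝒢] A) (hA1 : MeasurableSet[𝒢] A1)
    (hAB : A ∩ {ω | T ω = S ω ∧ S ω < ∞} = A1) :
    μ[A.indicator (fun _ => (1 : ℝ)) | stoppedSigma ℱ T hT]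
      =ᵐ[μ.restrict {ω | T ω = S ω ∧ S ω < ∞}]
    μ[A1.indicator (fun _ => (1 : ℝ)) | stoppedSigma ℱ S hS] := by
  set B : Set Ω := {ω | T ω = S ω ∧ S ω < ∞} with hBdef
  have hTm : Measurable[𝒢] T := meas_of_le (fun t => ℱ.le t _ (hT t))
  have hSm : Measurable[𝒢] S := meas_of_le (fun t => ℱ.le t _ (hS t))
  have hB𝒢 : MeasurableSet[𝒢] B := by
    have : B = ({a | T a ≤ S a} ∩ {a | S a ≤ T a}) ∩ (S ⁻¹' Set.Iio ⊤) := by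
      ext ω
      simp only [hBdef, mem_setOf_eq, mem_inter_iff, mem_preimage, mem_Iio]
      rw [le_antisymm_iff]
    rw [this]
    exact ((measurableSet_le hTm hSm).inter (measurableSet_le hSm hTm)).inter
      (hSm measurableSet_Iio)
  have hm : stoppedSigma ℱ T hT ≤ 𝒢 := fun s hs => hs.1
  have hm' : stoppedSigma ℱ S hS ≤ 𝒢 := fun s hs => hs.1
  haveI : SigmaFinite (μ.trim hm) := by
    haveI : IsFiniteMeasure (μ.trim hm) := isFiniteMeasure_trim hm
    infer_instance
  haveI : SigmaFinite (μ.trim hm') := by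
    haveI : IsFiniteMeasure (μ.trim hm') := isFiniteMeasure_trim hm'
    infer_instance
  -- B is measurable for both stopped σ-algebras
  have hBsymm : B = {ω | S ω = T ω ∧ T ω < ∞} := by
    ext ω; constructor
    · rintro ⟨h1, h2⟩; exact ⟨h1.symm, h1 ▸ h2⟩
    · rintro ⟨h1, h2⟩; exact ⟨h1.symm, h1 ▸ h2⟩
  have hBT : MeasurableSet[stoppedSigma ℱ T hT] B :=
    ⟨hB𝒢, agree_mem_stoppedSigma ℱ T S hT hS⟩
  have hBS : MeasurableSet[stoppedSigma ℱ S hS] B := by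
    refine ⟨hB𝒢, fun t => ?_⟩
    rw [hBsymm]
    exact agree_mem_stoppedSigma ℱ S T hS hT t
  -- trace σ-algebras on B agree
  have htrace : ∀ u : Set Ω, MeasurableSet[stoppedSigma ℱ T hT] (B ∩ u) ↔
      MeasurableSet[stoppedSigma ℱ S hS] (B ∩ u) := by
    have hset : ∀ t : ℝ≥0, ∀ u : Set Ω,
        (B ∩ u) ∩ {ω | S ω ≤ (t : ℝ≥0∞)} = (B ∩ u) ∩ {ω | T ω ≤ (t : ℝ≥0∞)} := by
      intro t u; ext ω
      simp only [mem_inter_iff, mem_setOf_eq, hBdef]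
      constructor
      · rintro ⟨⟨⟨h1, h2⟩, hu⟩, hle⟩; exact ⟨⟨⟨h1, h2⟩, hu⟩, h1 ▸ hle⟩
      · rintro ⟨⟨⟨h1, h2⟩, hu⟩, hle⟩; exact ⟨⟨⟨h1, h2⟩, hu⟩, h1 ▸ hle⟩
    intro u
    constructor
    · rintro ⟨hG, h⟩
      exact ⟨hG, fun t => (hset t u) ▸ h t⟩
    · rintro ⟨hG, h⟩
      exact ⟨hG, fun t => (hset t u).symm ▸ h t⟩
  -- integrability
  have hint : Integrable (A.indicator (fun _ => (1 : ℝ))) μ :=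
    (integrable_const (1 : ℝ)).indicator hA
  have hintAB : Integrable ((A ∩ B).indicator (fun _ => (1 : ℝ))) μ :=
    (integrable_const (1 : ℝ)).indicator (hA.inter hB𝒢)
  have hintdiff : Integrable ((A \ B).indicator (fun _ => (1 : ℝ))) μ :=
    (integrable_const (1 : ℝ)).indicator (hA.diff hB𝒢)
  -- decompose 1_A = 1_{A∩B} + 1_{A\B}
  have hdecomp : A.indicator (fun _ => (1 : ℝ))
      = (A ∩ B).indicator (fun _ => (1 : ℝ)) + (A \ B).indicator (fun _ => (1 : ℝ)) := by
    have h := Set.indicator_union_of_disjoint (s := A ∩ B) (t := A \ B)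
      (Set.disjoint_of_subset_left (Set.inter_subset_right) disjoint_sdiff_right)
      (fun _ : Ω => (1 : ℝ))
    rw [Set.inter_union_diff] at h
    exact h
  -- E[1_{A\B}|F_T] vanishes a.e. on B
  have hzero : μ[(A \ B).indicator (fun _ => (1 : ℝ)) | stoppedSigma ℱ T hT]
      =ᵐ[μ.restrict B] 0 := by
    have h1 := condExp_indicator (m := stoppedSigma ℱ T hT) (μ := μ) hintdiff hBT
    have h2 : B.indicator ((A \ B).indicator (fun _ => (1 : ℝ))) = (0 : Ω → ℝ) := by
      funext ω
      by_cases hω : ω ∈ B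
      · rw [Set.indicator_of_mem hω]
        rcases Set.indicator_eq_zero_or_self ((A \ B)) (fun _ => (1:ℝ)) ω with h | h
        · exact h
        · by_cases hωd : ω ∈ A \ B
          · exact absurd hω hωd.2
          · rw [Set.indicator_of_notMem hωd]; rfl
      · rw [Set.indicator_of_notMem hω]; rfl
    rw [h2] at h1
    have h3 : μ[(0 : Ω → ℝ) | stoppedSigma ℱ T hT] = 0 := condExp_zero
    rw [h3] at h1
    -- h1 : 0 =ᵐ[μ] B.indicator (μ[(A \ B).indicator 1 | F_T])
    have h4 : B.indicator (μ[(A \ B).indicator (fun _ => (1 : ℝ)) | stoppedSigma ℱ T hT])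
        =ᵐ[μ] 0 := h1.symm
    rw [Filter.EventuallyEq, ae_restrict_iff' hB𝒢]
    filter_upwards [h4] with ω hω hωB
    rw [← Set.indicator_of_mem hωB
      (μ[(A \ B).indicator (fun _ => (1 : ℝ)) | stoppedSigma ℱ T hT]), hω]
  -- switch σ-algebras on B for the common part
  have hswitch : μ[(A ∩ B).indicator (fun _ => (1 : ℝ)) | stoppedSigma ℱ T hT]
      =ᵐ[μ.restrict B] μ[(A ∩ B).indicator (fun _ => (1 : ℝ)) | stoppedSigma ℱ S hS] :=
    condExp_ae_eq_restrict_of_measurableSpace_eq_on hm hm' hBT htrace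
  -- combine
  have hadd : μ[A.indicator (fun _ => (1 : ℝ)) | stoppedSigma ℱ T hT]
      =ᵐ[μ] μ[(A ∩ B).indicator (fun _ => (1 : ℝ)) | stoppedSigma ℱ T hT]
        + μ[(A \ B).indicator (fun _ => (1 : ℝ)) | stoppedSigma ℱ T hT] := by
    rw [hdecomp]
    exact condExp_add hintAB hintdiff _
  have hAB' : (A ∩ B).indicator (fun _ => (1 : ℝ)) = A1.indicator (fun _ => (1 : ℝ)) := by
    rw [hAB]
  calc μ[A.indicator (fun _ => (1 : ℝ)) | stoppedSigma ℱ T hT]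
      =ᵐ[μ.restrict B] μ[(A ∩ B).indicator (fun _ => (1 : ℝ)) | stoppedSigma ℱ T hT]
        + μ[(A \ B).indicator (fun _ => (1 : ℝ)) | stoppedSigma ℱ T hT] :=
        ae_restrict_of_ae hadd
    _ =ᵐ[μ.restrict B] μ[(A ∩ B).indicator (fun _ => (1 : ℝ)) | stoppedSigma ℱ S hS] := by
        filter_upwards [hzero, hswitch] with ω h0 hsw
        simp only [Pi.add_apply, h0, hsw, Pi.zero_apply, add_zero]
    _ = μ[A1.indicator (fun _ => (1 : ℝ)) | stoppedSigma ℱ S hS] := by rw [hAB']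

end Key

lemma meas_agree {Ω : Type*} {m : MeasurableSpace Ω} {T S : Ω → ℝ≥0∞}
    (hT : Measurable[m] T) (hS : Measurable[m] S) :
    MeasurableSet[m] {ω | T ω = S ω ∧ S ω < ∞} := by
  have : {ω | T ω = S ω ∧ S ω < ∞}
      = ({a | T a ≤ S a} ∩ {a | S a ≤ T a}) ∩ (S ⁻¹' Set.Iio ⊤) := by
    ext ω
    simp only [mem_setOf_eq, mem_inter_iff, mem_preimage, mem_Iio]
    rw [le_antisymm_iff]
  rw [this]
  exact ((measurableSet_le hT hS).inter (measurableSet_le hS hT)).inter (hS measurableSet_Iio)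

end AuxEntropy

section AuxEntropy2
open Set

/-- Invariance of the `γ`-entropy summands under splitting of the
exhausting stopping time: if `{τ = T < ∞} = {τ = T1 < ∞} ∪ {τ = T2 < ∞}` and the graphs of
`T1, T2` are disjoint, then `P`-a.e.
`1_{{τ=T}∩{T<∞}} (log(1/P({τ=T}∩{T<∞}|F_T)))^γ
  = 1_{{τ=T1}∩{T1<∞}} (log(1/P({τ=T1}∩{T1<∞}|F_{T1})))^γ
  + 1_{{τ=T2}∩{T2<∞}} (log(1/P({τ=T2}∩{T2<∞}|F_{T2})))^γ`. -/
theorem entropy_invariant_under_exhausting_split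
    {Ω : Type*} {𝒢 : MeasurableSpace Ω} (μ : Measure Ω) [IsProbabilityMeasure μ]
    (ℱ : Filtration ℝ≥0 𝒢) (τ : Ω → ℝ≥0∞) (hτ : Measurable τ)
    (T T1 T2 : Ω → ℝ≥0∞)
    (hT : ∀ t : ℝ≥0, MeasurableSet[ℱ t] {ω | T ω ≤ (t : ℝ≥0∞)})
    (hT1 : ∀ t : ℝ≥0, MeasurableSet[ℱ t] {ω | T1 ω ≤ (t : ℝ≥0∞)})
    (hT2 : ∀ t : ℝ≥0, MeasurableSet[ℱ t] {ω | T2 ω ≤ (t : ℝ≥0∞)})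
    (hsplit : {ω | τ ω = T ω ∧ T ω < ∞}
      = {ω | τ ω = T1 ω ∧ T1 ω < ∞} ∪ {ω | τ ω = T2 ω ∧ T2 ω < ∞})
    (hdisj : {ω | T1 ω = T2 ω ∧ T1 ω < ∞} = ∅)
    (γ : ℝ) (hγ : 0 < γ) :
    ∀ᵐ ω ∂μ,
      ({ω' | τ ω' = T ω' ∧ T ω' < ∞}).indicator (fun _ => (1 : ℝ)) ω *
          Real.log (1 / (μ[({ω' | τ ω' = T ω' ∧ T ω' < ∞}).indicator (fun _ => (1 : ℝ)) |
              stoppedSigma ℱ T hT]) ω) ^ γ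
        = ({ω' | τ ω' = T1 ω' ∧ T1 ω' < ∞}).indicator (fun _ => (1 : ℝ)) ω *
            Real.log (1 / (μ[({ω' | τ ω' = T1 ω' ∧ T1 ω' < ∞}).indicator (fun _ => (1 : ℝ)) |
                stoppedSigma ℱ T1 hT1]) ω) ^ γ
          + ({ω' | τ ω' = T2 ω' ∧ T2 ω' < ∞}).indicator (fun _ => (1 : ℝ)) ω *
            Real.log (1 / (μ[({ω' | τ ω' = T2 ω' ∧ T2 ω' < ∞}).indicator (fun _ => (1 : ℝ)) |
                stoppedSigma ℱ T2 hT2]) ω) ^ γ := by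
  set A : Set Ω := {ω' | τ ω' = T ω' ∧ T ω' < ∞} with hAdef
  set A1 : Set Ω := {ω' | τ ω' = T1 ω' ∧ T1 ω' < ∞} with hA1def
  set A2 : Set Ω := {ω' | τ ω' = T2 ω' ∧ T2 ω' < ∞} with hA2def
  set B1 : Set Ω := {ω | T ω = T1 ω ∧ T1 ω < ∞} with hB1def
  set B2 : Set Ω := {ω | T ω = T2 ω ∧ T2 ω < ∞} with hB2def
  have hTm : Measurable[𝒢] T := meas_of_le (fun t => ℱ.le t _ (hT t))
  have hT1m : Measurable[𝒢] T1 := meas_of_le (fun t => ℱ.le t _ (hT1 t))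
  have hT2m : Measurable[𝒢] T2 := meas_of_le (fun t => ℱ.le t _ (hT2 t))
  have hA : MeasurableSet[𝒢] A := meas_agree hτ hTm
  have hA1 : MeasurableSet[𝒢] A1 := meas_agree hτ hT1m
  have hA2 : MeasurableSet[𝒢] A2 := meas_agree hτ hT2m
  have hB1 : MeasurableSet[𝒢] B1 := meas_agree hTm hT1m
  have hB2 : MeasurableSet[𝒢] B2 := meas_agree hTm hT2m
  have hA1subA : A1 ⊆ A := by rw [hsplit]; exact Set.subset_union_left
  have hA2subA : A2 ⊆ A := by rw [hsplit]; exact Set.subset_union_right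
  have hAB1 : A ∩ B1 = A1 := by
    ext ω
    constructor
    · rintro ⟨⟨h1, _⟩, ⟨h2, h3⟩⟩
      exact ⟨h1.trans h2, h3⟩
    · intro hω
      have hωA := hA1subA hω
      exact ⟨hωA, hωA.1.symm.trans hω.1, hω.2⟩
  have hAB2 : A ∩ B2 = A2 := by
    ext ω
    constructor
    · rintro ⟨⟨h1, _⟩, ⟨h2, h3⟩⟩
      exact ⟨h1.trans h2, h3⟩
    · intro hω
      have hωA := hA2subA hω
      exact ⟨hωA, hωA.1.symm.trans hω.1, hω.2⟩
  have key1 := condexp_agree μ ℱ T T1 hT hT1 A A1 hA hA1 hAB1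
  have key2 := condexp_agree μ ℱ T T2 hT hT2 A A2 hA hA2 hAB2
  have glob1 : ∀ᵐ ω ∂μ, ω ∈ B1 →
      (μ[A.indicator (fun _ => (1 : ℝ)) | stoppedSigma ℱ T hT]) ω
        = (μ[A1.indicator (fun _ => (1 : ℝ)) | stoppedSigma ℱ T1 hT1]) ω :=
    (ae_restrict_iff' hB1).1 key1
  have glob2 : ∀ᵐ ω ∂μ, ω ∈ B2 →
      (μ[A.indicator (fun _ => (1 : ℝ)) | stoppedSigma ℱ T hT]) ω
        = (μ[A2.indicator (fun _ => (1 : ℝ)) | stoppedSigma ℱ T2 hT2]) ω :=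
    (ae_restrict_iff' hB2).1 key2
  filter_upwards [glob1, glob2] with ω h1 h2
  by_cases hω1 : ω ∈ A1
  · have hωA : ω ∈ A := hA1subA hω1
    have hωB1 : ω ∈ B1 := ⟨hωA.1.symm.trans hω1.1, hω1.2⟩
    have hω2 : ω ∉ A2 := by
      intro h
      have : ω ∈ ({ω | T1 ω = T2 ω ∧ T1 ω < ∞} : Set Ω) :=
        ⟨hω1.1.symm.trans h.1, hω1.2⟩
      rw [hdisj] at this
      exact this
    rw [Set.indicator_of_mem hωA, Set.indicator_of_mem hω1, Set.indicator_of_notMem hω2,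
      h1 hωB1]
    ring
  · by_cases hω2 : ω ∈ A2
    · have hωA : ω ∈ A := hA2subA hω2
      have hωB2 : ω ∈ B2 := ⟨hωA.1.symm.trans hω2.1, hω2.2⟩
      rw [Set.indicator_of_mem hωA, Set.indicator_of_mem hω2, Set.indicator_of_notMem hω1,
        h2 hωB2]
      ring
    · have hωA : ω ∉ A := by
        intro h
        rw [hsplit] at h
        exact h.elim hω1 hω2
      rw [Set.indicator_of_notMem hωA, Set.indicator_of_notMem hω1,
        Set.indicator_of_notMem hω2]
      ring

end AuxEntropy2
end

section
/- For every γ > 0 and every ε ∈ (0,1) there exist finite constants C1, C2 > 0 such that for all z ∈ (0,1): ((1 − z)/z) · ∫_0^z (log(1/β))^γ (1 − β)^{−2} dβ ≤ C1 + C2 · 1_{(0,ε]}(z) · (log(1/z))^γ. -/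
open MeasureTheory


namespace EntropyIntegralAux
open MeasureTheory Set

lemma log_rpow_le {γ t : ℝ} (hγ : 0 < γ) (ht : 1 ≤ t) :
    Real.log t ^ γ ≤ (2*γ)^γ * t ^ (2⁻¹ : ℝ) := by
  have ht0 : (0:ℝ) < t := lt_of_lt_of_le one_pos ht
  have h1 : Real.log t = 2*γ * Real.log (t ^ ((2*γ)⁻¹ : ℝ)) := by
    rw [Real.log_rpow ht0]; field_simp
  have h2 : Real.log t ≤ 2*γ * t ^ ((2*γ)⁻¹ : ℝ) := by
    rw [h1]
    have := Real.log_le_self (Real.rpow_nonneg ht0.le ((2*γ)⁻¹ : ℝ))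
    nlinarith [Real.rpow_nonneg ht0.le ((2*γ)⁻¹ : ℝ)]
  calc Real.log t ^ γ ≤ (2*γ * t ^ ((2*γ)⁻¹ : ℝ)) ^ γ :=
        Real.rpow_le_rpow (Real.log_nonneg ht) h2 hγ.le
    _ = (2*γ)^γ * t ^ (2⁻¹ : ℝ) := by
        rw [Real.mul_rpow (by positivity) (Real.rpow_nonneg ht0.le _),
          ← Real.rpow_mul ht0.le]
        congr 2
        field_simp

lemma add_rpow_le {γ a b : ℝ} (hγ : 0 ≤ γ) (ha : 0 ≤ a) (hb : 0 ≤ b) :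
    (a + b) ^ γ ≤ 2^γ * (a^γ + b^γ) := by
  have h2 : (0:ℝ) < (2:ℝ)^γ := Real.rpow_pos_of_pos two_pos γ
  rcases le_total a b with h | h
  · calc (a+b)^γ ≤ (2*b)^γ := Real.rpow_le_rpow (by linarith) (by linarith) hγ
      _ = 2^γ * b^γ := Real.mul_rpow (by norm_num) hb
      _ ≤ 2^γ * (a^γ + b^γ) := by nlinarith [Real.rpow_nonneg ha γ]
  · calc (a+b)^γ ≤ (2*a)^γ := Real.rpow_le_rpow (by linarith) (by linarith) hγ
      _ = 2^γ * a^γ := Real.mul_rpow (by norm_num) ha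
      _ ≤ 2^γ * (a^γ + b^γ) := by nlinarith [Real.rpow_nonneg hb γ]

lemma integrableOn_inv_sqrt (z : ℝ) :
    IntegrableOn (fun x : ℝ => x ^ (-2⁻¹ : ℝ)) (Ioo 0 z) := by
  rcases le_or_gt z 0 with h | h
  · rw [Ioo_eq_empty (by intro hh; linarith)]
    exact integrableOn_empty
  · have := (intervalIntegrable_iff_integrableOn_Ioc_of_le h.le).mp
      (intervalIntegral.intervalIntegrable_rpow' (by norm_num : (-1:ℝ) < -2⁻¹))
    exact this.mono_set Ioo_subset_Ioc_self

lemma integral_inv_sqrt {z : ℝ} (hz : 0 ≤ z) :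
    ∫ x in Ioo (0:ℝ) z, x ^ (-2⁻¹ : ℝ) = 2 * z ^ (2⁻¹ : ℝ) := by
  rw [← integral_Ioc_eq_integral_Ioo, ← intervalIntegral.integral_of_le hz,
    integral_rpow (Or.inl (by norm_num))]
  rw [Real.zero_rpow (by norm_num)]
  norm_num
  ring

lemma integrableOn_one_sub_rpow {γ : ℝ} (hγ : 0 < γ) :
    IntegrableOn (fun x : ℝ => (1-x) ^ (γ-1 : ℝ)) (Ioo 0 1) := by
  have h1 : IntervalIntegrable (fun x : ℝ => x ^ (γ-1 : ℝ)) volume 0 1 :=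
    intervalIntegral.intervalIntegrable_rpow' (by linarith)
  have h2 : IntervalIntegrable (fun x : ℝ => (1-x) ^ (γ-1 : ℝ)) volume 0 1 := by
    have := (h1.comp_sub_left 1).symm
    simpa using this
  exact ((intervalIntegrable_iff_integrableOn_Ioc_of_le zero_le_one).mp h2).mono_set
    Ioo_subset_Ioc_self

lemma integral_one_sub_rpow {γ : ℝ} (hγ : 0 < γ) :
    ∫ x in Ioo (0:ℝ) 1, (1-x) ^ (γ-1 : ℝ) = 1/γ := by
  rw [← integral_Ioc_eq_integral_Ioo, ← intervalIntegral.integral_of_le zero_le_one]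
  have := intervalIntegral.integral_comp_sub_left (fun x : ℝ => x ^ (γ-1 : ℝ)) 1
    (a := 0) (b := 1)
  norm_num at this
  rw [this, integral_rpow (Or.inl (by linarith))]
  rw [show γ - 1 + 1 = γ by ring, Real.zero_rpow hγ.ne', Real.one_rpow]
  norm_num

lemma integrableOn_h {γ : ℝ} (hγ : 0 < γ) {z : ℝ} (hz : z ≤ 1) :
    IntegrableOn (fun x : ℝ => Real.log (1/x) ^ γ) (Ioo 0 z) := by
  apply Integrable.mono' (((integrableOn_inv_sqrt z).const_mul ((2*γ)^γ)))
  · exact ((Real.measurable_log.comp (measurable_const.div measurable_id)).pow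
      measurable_const).aestronglyMeasurable
  · filter_upwards [ae_restrict_mem measurableSet_Ioo] with x hx
    obtain ⟨hx0, hxz⟩ := hx
    have hx1 : (1:ℝ) ≤ 1/x := by
      rw [le_div_iff₀ hx0]; linarith
    have hlog : (0:ℝ) ≤ Real.log (1/x) := Real.log_nonneg hx1
    rw [Real.norm_eq_abs, abs_of_nonneg (Real.rpow_nonneg hlog γ)]
    calc Real.log (1/x) ^ γ ≤ (2*γ)^γ * (1/x) ^ (2⁻¹ : ℝ) := log_rpow_le hγ hx1
      _ = (2*γ)^γ * x ^ (-2⁻¹ : ℝ) := by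
          rw [one_div, ← Real.rpow_neg_one x, ← Real.rpow_mul hx0.le]
          norm_num

lemma integral_h_le {γ : ℝ} (hγ : 0 < γ) {z : ℝ} (hz0 : 0 < z) (hz1 : z ≤ 1) :
    ∫ x in Ioo (0:ℝ) z, Real.log (1/x) ^ γ
      ≤ 2^γ * (Real.log (1/z) ^ γ + 2*(2*γ)^γ) * z := by
  set L := Real.log (1/z) ^ γ with hL
  have hz1' : (1:ℝ) ≤ 1/z := by rw [le_div_iff₀ hz0]; linarith
  have hLnn : 0 ≤ L := Real.rpow_nonneg (Real.log_nonneg hz1') γ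
  have hconst : IntegrableOn (fun _ : ℝ => (2:ℝ)^γ * L) (Ioo 0 z) := by
    exact integrableOn_const measure_Ioo_lt_top.ne
  have hgint : IntegrableOn
      (fun x : ℝ => (2:ℝ)^γ * L + 2^γ*(2*γ)^γ * z^(2⁻¹:ℝ) * x^(-2⁻¹:ℝ)) (Ioo 0 z) :=
    hconst.add ((integrableOn_inv_sqrt z).const_mul _)
  have hmono : ∫ x in Ioo (0:ℝ) z, Real.log (1/x) ^ γ
      ≤ ∫ x in Ioo (0:ℝ) z, ((2:ℝ)^γ * L + 2^γ*(2*γ)^γ * z^(2⁻¹:ℝ) * x^(-2⁻¹:ℝ)) := by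
    apply integral_mono_of_nonneg
    · filter_upwards [ae_restrict_mem measurableSet_Ioo] with x hx
      have hx1 : (1:ℝ) ≤ 1/x := by rw [le_div_iff₀ hx.1]; linarith [hx.2]
      exact Real.rpow_nonneg (Real.log_nonneg hx1) γ
    · exact hgint
    · filter_upwards [ae_restrict_mem measurableSet_Ioo] with x hx
      obtain ⟨hx0, hxz⟩ := hx
      have hx1 : (1:ℝ) ≤ 1/x := by rw [le_div_iff₀ hx0]; linarith
      have hzx1 : (1:ℝ) ≤ z/x := by rw [le_div_iff₀ hx0]; linarith
      have key : Real.log (1/x) = Real.log (1/z) + Real.log (z/x) := by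
        rw [one_div, one_div, Real.log_inv, Real.log_inv, Real.log_div hz0.ne' hx0.ne']
        ring
      have hzx : (z/x) ^ (2⁻¹:ℝ) = z^(2⁻¹:ℝ) * x^(-2⁻¹:ℝ) := by
        rw [Real.div_rpow hz0.le hx0.le, Real.rpow_neg hx0.le, div_eq_mul_inv]
      calc Real.log (1/x) ^ γ = (Real.log (1/z) + Real.log (z/x)) ^ γ := by rw [key]
        _ ≤ 2^γ * (L + Real.log (z/x) ^ γ) :=
            add_rpow_le hγ.le (Real.log_nonneg hz1') (Real.log_nonneg hzx1)
        _ ≤ 2^γ * (L + (2*γ)^γ * (z/x) ^ (2⁻¹:ℝ)) := by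
            have := log_rpow_le hγ hzx1
            have h2 : (0:ℝ) ≤ (2:ℝ)^γ := (Real.rpow_pos_of_pos two_pos γ).le
            nlinarith
        _ = (2:ℝ)^γ * L + 2^γ*(2*γ)^γ * z^(2⁻¹:ℝ) * x^(-2⁻¹:ℝ) := by
            rw [hzx]; ring
  have hcalc : ∫ x in Ioo (0:ℝ) z, ((2:ℝ)^γ * L + 2^γ*(2*γ)^γ * z^(2⁻¹:ℝ) * x^(-2⁻¹:ℝ))
      = 2^γ * (L + 2*(2*γ)^γ) * z := by
    rw [integral_add hconst ((integrableOn_inv_sqrt z).const_mul _)]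
    rw [setIntegral_const, integral_const_mul, integral_inv_sqrt hz0.le]
    rw [Real.volume_real_Ioo_of_le hz0.le]
    have : z ^ (2⁻¹:ℝ) * (2 * z ^ (2⁻¹:ℝ)) = 2 * z := by
      rw [show z ^ (2⁻¹:ℝ) * (2 * z ^ (2⁻¹:ℝ)) = 2 * (z ^ (2⁻¹:ℝ) * z ^ (2⁻¹:ℝ)) by ring,
        ← Real.rpow_add hz0]
      norm_num
    rw [smul_eq_mul, mul_assoc (2^γ*(2*γ)^γ) (z^(2⁻¹:ℝ)) (2 * z ^ (2⁻¹:ℝ)), this]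
    ring
  linarith [hmono, hcalc.le, hcalc.ge]

lemma f_nonneg {γ : ℝ} {x : ℝ} (hx0 : 0 < x) (hx1 : x ≤ 1) :
    0 ≤ Real.log (1/x) ^ γ * ((1-x)^2)⁻¹ := by
  have hx1' : (1:ℝ) ≤ 1/x := by rw [le_div_iff₀ hx0]; linarith
  exact mul_nonneg (Real.rpow_nonneg (Real.log_nonneg hx1') γ) (by positivity)

lemma integrableOn_f {γ w : ℝ} (hγ : 0 < γ) (hw1 : w < 1) :
    IntegrableOn (fun x : ℝ => Real.log (1/x) ^ γ * ((1-x)^2)⁻¹) (Ioo 0 w) := by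
  apply Integrable.mono' (((integrableOn_h hγ hw1.le).const_mul (((1-w)^2)⁻¹)))
  · exact (((Real.measurable_log.comp (measurable_const.div measurable_id)).pow
      measurable_const).mul ((measurable_const.sub measurable_id).pow
      measurable_const).inv).aestronglyMeasurable
  · filter_upwards [ae_restrict_mem measurableSet_Ioo] with x hx
    obtain ⟨hx0, hxw⟩ := hx
    rw [Real.norm_eq_abs, abs_of_nonneg (f_nonneg hx0 (by linarith))]
    have hx1' : (1:ℝ) ≤ 1/x := by rw [le_div_iff₀ hx0]; linarith
    have h1 : ((1-x)^2)⁻¹ ≤ ((1-w)^2)⁻¹ := by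
      apply inv_anti₀ (by nlinarith) (by nlinarith)
    calc Real.log (1/x) ^ γ * ((1-x)^2)⁻¹
        ≤ Real.log (1/x) ^ γ * ((1-w)^2)⁻¹ :=
          mul_le_mul_of_nonneg_left h1 (Real.rpow_nonneg (Real.log_nonneg hx1') γ)
      _ = ((1-w)^2)⁻¹ * Real.log (1/x) ^ γ := by ring

lemma integral_f_le_small {γ ε z : ℝ} (hγ : 0 < γ) (hε : ε ∈ Ioo (0:ℝ) 1)
    (hz0 : 0 < z) (hzε : z ≤ ε) :
    ∫ x in Ioo (0:ℝ) z, Real.log (1/x) ^ γ * ((1-x)^2)⁻¹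
      ≤ ((1-ε)^2)⁻¹ * (2^γ * (Real.log (1/z) ^ γ + 2*(2*γ)^γ) * z) := by
  have hz1 : z ≤ 1 := hzε.trans hε.2.le
  have h1 : ∫ x in Ioo (0:ℝ) z, Real.log (1/x) ^ γ * ((1-x)^2)⁻¹
      ≤ ∫ x in Ioo (0:ℝ) z, ((1-ε)^2)⁻¹ * Real.log (1/x) ^ γ := by
    apply integral_mono_of_nonneg
    · filter_upwards [ae_restrict_mem measurableSet_Ioo] with x hx
      exact f_nonneg hx.1 (by linarith [hx.2])
    · exact (integrableOn_h hγ hz1).const_mul _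
    · filter_upwards [ae_restrict_mem measurableSet_Ioo] with x hx
      obtain ⟨hx0, hxz⟩ := hx
      have hx1' : (1:ℝ) ≤ 1/x := by rw [le_div_iff₀ hx0]; linarith
      have h1 : ((1-x)^2)⁻¹ ≤ ((1-ε)^2)⁻¹ := by
        apply inv_anti₀ (by nlinarith [hε.2]) (by nlinarith [hε.2])
      calc Real.log (1/x) ^ γ * ((1-x)^2)⁻¹
          ≤ Real.log (1/x) ^ γ * ((1-ε)^2)⁻¹ :=
            mul_le_mul_of_nonneg_left h1 (Real.rpow_nonneg (Real.log_nonneg hx1') γ)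
        _ = ((1-ε)^2)⁻¹ * Real.log (1/x) ^ γ := by ring
  rw [integral_const_mul] at h1
  have h2 := integral_h_le hγ hz0 hz1
  have hE : (0:ℝ) ≤ ((1-ε)^2)⁻¹ := by positivity
  calc ∫ x in Ioo (0:ℝ) z, Real.log (1/x) ^ γ * ((1-x)^2)⁻¹
      ≤ ((1-ε)^2)⁻¹ * ∫ x in Ioo (0:ℝ) z, Real.log (1/x) ^ γ := h1
    _ ≤ ((1-ε)^2)⁻¹ * (2^γ * (Real.log (1/z) ^ γ + 2*(2*γ)^γ) * z) :=
        mul_le_mul_of_nonneg_left h2 hE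

lemma integrableOn_f_Ico {γ ε z : ℝ} (hγ : 0 < γ) (hε0 : 0 < ε) (hz1 : z < 1) :
    IntegrableOn (fun x : ℝ => Real.log (1/x) ^ γ * ((1-x)^2)⁻¹) (Ico ε z) := by
  rcases le_or_gt z ε with h | h
  · rw [Ico_eq_empty (by intro hh; linarith)]
    exact integrableOn_empty
  · apply (ContinuousOn.integrableOn_compact isCompact_Icc _).mono_set Ico_subset_Icc_self
    intro x hx
    obtain ⟨hx1, hx2⟩ := hx
    have hx0 : 0 < x := lt_of_lt_of_le hε0 hx1
    apply ContinuousAt.continuousWithinAt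
    apply ContinuousAt.mul
    · apply ContinuousAt.rpow_const
      · exact (Real.continuousAt_log (by positivity)).comp
          (continuousAt_const.div continuousAt_id hx0.ne')
      · right; exact hγ.le
    · apply ContinuousAt.inv₀ (by fun_prop)
      have : 1 - x ≠ 0 := by intro hh; nlinarith
      positivity

lemma integral_f_Ico_le {γ ε z : ℝ} (hγ : 0 < γ) (hε : ε ∈ Ioo (0:ℝ) 1)
    (hεz : ε < z) (hz1 : z < 1) :
    ∫ x in Ico ε z, (1-z) * (Real.log (1/x) ^ γ * ((1-x)^2)⁻¹)
      ≤ (ε^γ)⁻¹ * (1/γ) := by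
  have hsub : Ico ε z ⊆ Ioo (0:ℝ) 1 := fun x hx =>
    ⟨lt_of_lt_of_le hε.1 hx.1, lt_trans hx.2 hz1⟩
  have h1 : ∫ x in Ico ε z, (1-z) * (Real.log (1/x) ^ γ * ((1-x)^2)⁻¹)
      ≤ ∫ x in Ico ε z, (ε^γ)⁻¹ * (1-x) ^ (γ-1 : ℝ) := by
    apply integral_mono_of_nonneg
    · filter_upwards [ae_restrict_mem measurableSet_Ico] with x hx
      exact mul_nonneg (by linarith) (f_nonneg (hsub hx).1 (hsub hx).2.le)
    · exact IntegrableOn.mono_set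
        (((integrableOn_one_sub_rpow hγ).const_mul ((ε^γ)⁻¹) : IntegrableOn _ _ _)) hsub
    · filter_upwards [ae_restrict_mem measurableSet_Ico] with x hx
      obtain ⟨hxε, hxz⟩ := hx
      have hx0 : 0 < x := lt_of_lt_of_le hε.1 hxε
      have hx1 : x < 1 := lt_trans hxz hz1
      have hu : (0:ℝ) < 1 - x := by linarith
      have hx1' : (1:ℝ) ≤ 1/x := by rw [le_div_iff₀ hx0]; linarith
      set A := Real.log (1/x) ^ γ with hA
      have hAnn : 0 ≤ A := Real.rpow_nonneg (Real.log_nonneg hx1') γ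
      have e3 : A ≤ (1-x)^(γ:ℝ) * (ε^γ)⁻¹ := by
        have hlog : Real.log (1/x) ≤ (1-x)/ε := by
          calc Real.log (1/x) ≤ 1/x - 1 := Real.log_le_sub_one_of_pos (by positivity)
            _ = (1-x)/x := by field_simp
            _ ≤ (1-x)/ε := by gcongr; exact hε.1
        calc A ≤ ((1-x)/ε)^γ :=
              Real.rpow_le_rpow (Real.log_nonneg hx1') hlog hγ.le
          _ = (1-x)^(γ:ℝ) * (ε^γ)⁻¹ := by
              rw [Real.div_rpow hu.le hε.1.le, div_eq_mul_inv]
      have e1 : (1-z) * (A * ((1-x)^2)⁻¹) ≤ (1-x) * (A * ((1-x)^2)⁻¹) :=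
        mul_le_mul_of_nonneg_right (by linarith) (by positivity)
      have e2 : (1-x) * (A * ((1-x)^2)⁻¹) = A * (1-x)⁻¹ := by
        field_simp
      have e4 : A * (1-x)⁻¹ ≤ ((1-x)^(γ:ℝ) * (ε^γ)⁻¹) * (1-x)⁻¹ :=
        mul_le_mul_of_nonneg_right e3 (by positivity)
      have e5 : ((1-x)^(γ:ℝ) * (ε^γ)⁻¹) * (1-x)⁻¹ = (ε^γ)⁻¹ * (1-x)^(γ-1:ℝ) := by
        rw [Real.rpow_sub_one hu.ne']
        field_simp
      linarith
  have h2 : ∫ x in Ico ε z, (ε^γ)⁻¹ * (1-x) ^ (γ-1 : ℝ)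
      ≤ (ε^γ)⁻¹ * (1/γ) := by
    rw [integral_const_mul]
    apply mul_le_mul_of_nonneg_left _ (inv_nonneg.mpr (Real.rpow_nonneg hε.1.le γ))
    rw [← integral_one_sub_rpow hγ]
    apply setIntegral_mono_set (integrableOn_one_sub_rpow hγ)
    · filter_upwards [ae_restrict_mem measurableSet_Ioo] with x hx
      exact Real.rpow_nonneg (by linarith [hx.2]) _
    · exact HasSubset.Subset.eventuallyLE hsub
  linarith


end EntropyIntegralAux

open EntropyIntegralAux Set in
/-- For every `γ > 0` and every `ε ∈ (0,1)` there exist finite constants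
`C1, C2 > 0` such that for all `z ∈ (0,1)`:
`((1 − z)/z) ⬝ ∫_0^z (log(1/β))^γ (1 − β)^{−2} dβ ≤ C1 + C2 ⬝ 1_{(0,ε]}(z) ⬝ (log(1/z))^γ`. -/
theorem entropy_integral_bound (γ : ℝ) (hγ : 0 < γ) (ε : ℝ) (hε : ε ∈ Set.Ioo (0 : ℝ) 1) :
    ∃ C1 C2 : ℝ, 0 < C1 ∧ 0 < C2 ∧
      ∀ z ∈ Set.Ioo (0 : ℝ) 1,
        ((1 - z) / z) *
            ∫ x in Set.Ioo (0 : ℝ) z, Real.log (1 / x) ^ γ * ((1 - x) ^ 2)⁻¹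
          ≤ C1 + C2 * (Set.Ioc (0 : ℝ) ε).indicator (fun _ => (1 : ℝ)) z *
              Real.log (1 / z) ^ γ := by
  obtain ⟨hε0, hε1⟩ := hε
  have h1ε : (0:ℝ) < 1 - ε := by linarith
  set K : ℝ := (2*γ)^γ with hK
  set E : ℝ := ((1-ε)^2)⁻¹ with hE
  set Lε : ℝ := Real.log (1/ε) ^ γ with hLε
  have hEpos : 0 < E := by rw [hE]; positivity
  have h2γ : (0:ℝ) < (2:ℝ)^γ := Real.rpow_pos_of_pos two_pos γ
  have hKnn : (0:ℝ) ≤ K := Real.rpow_nonneg (by linarith) γ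
  have hLεnn : (0:ℝ) ≤ Lε :=
    Real.rpow_nonneg (Real.log_nonneg (by rw [le_div_iff₀ hε0]; linarith)) γ
  have ht2 : (0:ℝ) ≤ (ε^γ)⁻¹ * (1/γ) * ε⁻¹ :=
    mul_nonneg (mul_nonneg (inv_nonneg.mpr (Real.rpow_nonneg hε0.le γ))
      (by positivity)) (inv_nonneg.mpr hε0.le)
  refine ⟨E * 2^γ * (Lε + 2*K) + (ε^γ)⁻¹ * (1/γ) * ε⁻¹ + 1, E * 2^γ, ?_, by positivity, ?_⟩
  · have t1 : 0 ≤ E * 2^γ * (Lε + 2*K) :=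
      mul_nonneg (mul_nonneg hEpos.le h2γ.le) (by linarith)
    linarith
  intro z hz
  obtain ⟨hz0, hz1⟩ := hz
  set L : ℝ := Real.log (1/z) ^ γ with hL
  have hLnn : (0:ℝ) ≤ L :=
    Real.rpow_nonneg (Real.log_nonneg (by rw [le_div_iff₀ hz0]; linarith)) γ
  have hInn : 0 ≤ ∫ x in Ioo (0:ℝ) z, Real.log (1/x) ^ γ * ((1-x)^2)⁻¹ :=
    setIntegral_nonneg measurableSet_Ioo (fun x hx => f_nonneg hx.1 (by linarith [hx.2]))
  rcases le_or_gt z ε with hc | hc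
  · -- small z
    rw [Set.indicator_of_mem (Set.mem_Ioc.mpr ⟨hz0, hc⟩)]
    have hb := integral_f_le_small hγ ⟨hε0, hε1⟩ hz0 hc
    have step1 : ((1-z)/z) * (∫ x in Ioo (0:ℝ) z, Real.log (1/x) ^ γ * ((1-x)^2)⁻¹)
        ≤ (1/z) * (∫ x in Ioo (0:ℝ) z, Real.log (1/x) ^ γ * ((1-x)^2)⁻¹) := by
      apply mul_le_mul_of_nonneg_right _ hInn
      gcongr <;> linarith
    have step2 : (1/z) * (∫ x in Ioo (0:ℝ) z, Real.log (1/x) ^ γ * ((1-x)^2)⁻¹)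
        ≤ (1/z) * (E * (2^γ * (L + 2*K) * z)) :=
      mul_le_mul_of_nonneg_left hb (by positivity)
    have step3 : (1/z) * (E * (2^γ * (L + 2*K) * z)) = E * 2^γ * L + E * 2^γ * (2*K) := by
      field_simp
    have t1 : 0 ≤ E * 2^γ * Lε := mul_nonneg (mul_nonneg hEpos.le h2γ.le) hLεnn
    nlinarith [step1, step2, step3, ht2]
  · -- large z
    rw [Set.indicator_of_notMem (fun hmem => absurd hmem.2 (not_le.mpr hc))]
    rw [mul_zero, zero_mul, add_zero]
    have hsplit : Ioo (0:ℝ) z = Ioo (0:ℝ) ε ∪ Ico ε z :=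
      (Ioo_union_Ico_eq_Ioo hε0 hc.le).symm
    have hdisj : Disjoint (Ioo (0:ℝ) ε) (Ico ε z) :=
      Set.disjoint_left.mpr (fun a ha hb => absurd hb.1 (not_le.mpr ha.2))
    rw [hsplit, setIntegral_union hdisj measurableSet_Ico (integrableOn_f hγ hε1)
      (integrableOn_f_Ico hγ hε0 hz1)]
    set I1 : ℝ := ∫ x in Ioo (0:ℝ) ε, Real.log (1/x) ^ γ * ((1-x)^2)⁻¹ with hI1d
    set I2 : ℝ := ∫ x in Ico ε z, Real.log (1/x) ^ γ * ((1-x)^2)⁻¹ with hI2d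
    have hI1nn : 0 ≤ I1 :=
      setIntegral_nonneg measurableSet_Ioo (fun x hx => f_nonneg hx.1 (by linarith [hx.2]))
    have hI2nn : 0 ≤ I2 :=
      setIntegral_nonneg measurableSet_Ico (fun x hx =>
        f_nonneg (lt_of_lt_of_le hε0 hx.1) (by linarith [hx.2]))
    have hI1 : I1 ≤ E * (2^γ * (Lε + 2*K) * ε) :=
      integral_f_le_small hγ ⟨hε0, hε1⟩ hε0 le_rfl
    have hI2 : (1-z) * I2 ≤ (ε^γ)⁻¹ * (1/γ) := by
      rw [hI2d, ← integral_const_mul]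
      exact integral_f_Ico_le hγ ⟨hε0, hε1⟩ hc hz1
    have ha : (1-z)/z ≤ 1/ε := by
      rw [div_le_div_iff₀ hz0 hε0]
      nlinarith
    have t1 : ((1-z)/z) * I1 ≤ (1/ε) * I1 := mul_le_mul_of_nonneg_right ha hI1nn
    have t1b : (1/ε) * I1 ≤ (1/ε) * (E * (2^γ * (Lε + 2*K) * ε)) :=
      mul_le_mul_of_nonneg_left hI1 (by positivity)
    have t2b : (1/z) * ((1-z) * I2) ≤ (1/ε) * ((1-z) * I2) :=
      mul_le_mul_of_nonneg_right (by
        apply one_div_le_one_div_of_le hε0 hc.le) (mul_nonneg (by linarith) hI2nn)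
    have t2c : (1/ε) * ((1-z) * I2) ≤ (1/ε) * ((ε^γ)⁻¹ * (1/γ)) :=
      mul_le_mul_of_nonneg_left hI2 (by positivity)
    have key1 : (1/ε) * (E * (2^γ * (Lε + 2*K) * ε)) = E * 2^γ * (Lε + 2*K) := by
      field_simp
    have key2 : (1/ε) * ((ε^γ)⁻¹ * (1/γ)) = (ε^γ)⁻¹ * (1/γ) * ε⁻¹ := by
      rw [one_div]; ring
    calc ((1-z)/z) * (I1 + I2) = ((1-z)/z) * I1 + (1/z) * ((1-z) * I2) := by
          field_simp
      _ ≤ (1/ε) * (E * (2^γ * (Lε + 2*K) * ε)) + (1/ε) * ((ε^γ)⁻¹ * (1/γ)) := by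
          linarith
      _ ≤ E * 2^γ * (Lε + 2*K) + (ε^γ)⁻¹ * (1/γ) * ε⁻¹ + 1 := by
          rw [key1, key2]; linarith
end
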